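/- Let (a,b) be a perplex parameter and let f = (u,v) : ℝ² → ℝ² be ℙ_{a,b}-differentiable with derivative f', and assume f is differentiable in the usual real sense. Then for every x ∈ ℝ²: f'(x) = (0,1)⁻¹ * (u_{x₂}(x), v_{x₂}(x)) and f'(x) = (1,0)⁻¹ * (u_{x₁}(x), v_{x₁}(x)), where (0,1)⁻¹ and (1,0)⁻¹ are the *-inverses of the standard basis vectors; consequently the generalized Cauchy–Riemann equation (0,1) * (u_{x₁}(x), v_{x₁}(x)) = (1,0) * (u_{x₂}(x), v_{x₂}(x)) holds at every x. -/

import Mathlib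

open Filter Topology

noncomputable section

/-- The perplex product on `ℝ²` determined by the parameters `a = (a₁,a₂,a₃)`,
`b = (b₁,b₂,b₃)`. -/
def pmul (a₁ a₂ a₃ b₁ b₂ b₃ : ℝ) (x y : ℝ × ℝ) : ℝ × ℝ :=
  (a₁ * x.1 * y.1 + a₂ * (x.1 * y.2 + x.2 * y.1) + a₃ * x.2 * y.2,
   b₁ * x.1 * y.1 + b₂ * (x.1 * y.2 + x.2 * y.1) + b₃ * x.2 * y.2)

/-- `(a,b)` is a perplex parameter: conditions (i)-(iv). -/
def IsPerplexParam (a₁ a₂ a₃ b₁ b₂ b₃ : ℝ) : Prop :=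
  a₁ * a₃ - a₂ ^ 2 ≠ 0 ∧ a₁ * b₂ - a₂ * b₁ ≠ 0 ∧
    a₂ * b₂ - a₃ * b₁ = 0 ∧ a₁ * a₃ - a₂ ^ 2 + a₂ * b₃ - a₃ * b₂ = 0

/-- The multiplicative identity `𝟙` of the perplex algebra. -/
def pone (a₁ a₂ b₁ b₂ : ℝ) : ℝ × ℝ :=
  (1 / (a₁ * b₂ - a₂ * b₁)) • ((b₂, -b₁) : ℝ × ℝ)

/-- The perplex norm `N`. -/
def pN (a₁ a₂ a₃ b₁ b₂ b₃ : ℝ) (x : ℝ × ℝ) : ℝ :=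
  (a₁ * b₂ - a₂ * b₁) * x.1 ^ 2 + (a₁ * b₃ - a₃ * b₁) * x.1 * x.2 -
    (a₁ * a₃ - a₂ ^ 2) * x.2 ^ 2

/-- The Euclidean norm on `ℝ²`. -/
noncomputable def enorm2 (x : ℝ × ℝ) : ℝ := Real.sqrt (x.1 ^ 2 + x.2 ^ 2)

open Classical in
/-- The `*`-inverse of `x` (junk value `0` if `x` is not invertible). -/
noncomputable def pinv (a₁ a₂ a₃ b₁ b₂ b₃ : ℝ) (x : ℝ × ℝ) : ℝ × ℝ :=
  if h : ∃ y, pmul a₁ a₂ a₃ b₁ b₂ b₃ x y = pone a₁ a₂ b₁ b₂ then h.choose else 0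

/-- A sequence of invertible elements converging to `0` that is positively
separated from the zero-divisor directions. -/
def PosSep (a₁ a₂ a₃ b₁ b₂ b₃ : ℝ) (h : ℕ → ℝ × ℝ) : Prop :=
  (∀ n, ∃ y, pmul a₁ a₂ a₃ b₁ b₂ b₃ (h n) y = pone a₁ a₂ b₁ b₂) ∧
    Tendsto h atTop (nhds 0) ∧
      ∃ c > 0, ∀ n, c ≤ |pN a₁ a₂ a₃ b₁ b₂ b₃ ((enorm2 (h n))⁻¹ • h n)|

/-- `f` is `ℙ_{a,b}`-differentiable with (continuous) derivative `f'`. -/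
def PDiff (a₁ a₂ a₃ b₁ b₂ b₃ : ℝ) (f f' : ℝ × ℝ → ℝ × ℝ) : Prop :=
  Continuous f' ∧
    ∀ x, ∀ h : ℕ → ℝ × ℝ, PosSep a₁ a₂ a₃ b₁ b₂ b₃ h →
      Tendsto
        (fun n => pmul a₁ a₂ a₃ b₁ b₂ b₃ (f (x + h n) - f x)
          (pinv a₁ a₂ a₃ b₁ b₂ b₃ (h n)))
        atTop (nhds (f' x))

/-!
For fixed `x`, `y ↦ x ⋆ y` is linear with matrix
`[[a₁x₁ + a₂x₂, a₂x₁ + a₃x₂], [b₁x₁ + b₂x₂, b₂x₁ + b₃x₂]]`, whose determinant is `N x` by (iv).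
Hence every `e` with `N e ≠ 0` is invertible, with `(t • e)⁻¹ = t⁻¹ • e⁻¹`, and `hₙ = e / (n + 1)`
is positively separated. Along it the perplex difference quotient is
`e⁻¹ ⋆ (n + 1) • (f (x + hₙ) - f x) → e⁻¹ ⋆ Df(x) e`. The directions `(1, 0)` and `(0, 1)` have
`N = a₁b₂ - a₂b₁` and `-(a₁a₃ - a₂²)`, which gives both formulas. Since `ℙ_{a,b}` is commutative,
associative and unital, multiplying `e₁⁻¹ ⋆ D₁ = e₂⁻¹ ⋆ D₂` by `e₁ ⋆ e₂` gives the generalized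
Cauchy–Riemann equation.
-/

section PerplexAlgebra

variable {a₁ a₂ a₃ b₁ b₂ b₃ : ℝ}

local infixl:70 " ⋆ " => pmul a₁ a₂ a₃ b₁ b₂ b₃
local notation "𝟙" => pone a₁ a₂ b₁ b₂
local notation "N" => pN a₁ a₂ a₃ b₁ b₂ b₃
local postfix:max "⁻¹ᵖ" => pinv a₁ a₂ a₃ b₁ b₂ b₃

theorem pmul_comm (x y : ℝ × ℝ) : x ⋆ y = y ⋆ x := by
  simp only [pmul, Prod.mk.injEq]
  constructor <;> ring

theorem smul_pmul (t : ℝ) (x y : ℝ × ℝ) : (t • x) ⋆ y = t • (x ⋆ y) := by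
  simp only [pmul, Prod.smul_fst, Prod.smul_snd, smul_eq_mul, Prod.smul_mk, Prod.mk.injEq]
  constructor <;> ring

theorem pmul_smul (t : ℝ) (x y : ℝ × ℝ) : x ⋆ (t • y) = t • (x ⋆ y) := by
  rw [pmul_comm, smul_pmul, pmul_comm]

theorem continuous_pmul_left (x : ℝ × ℝ) : Continuous (x ⋆ ·) := by
  unfold pmul
  fun_prop

theorem pN_smul (t : ℝ) (x : ℝ × ℝ) : N (t • x) = t ^ 2 * N x := by
  simp only [pN, Prod.smul_fst, Prod.smul_snd, smul_eq_mul]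
  ring

theorem pmul_bijective (h4 : a₁ * a₃ - a₂ ^ 2 + a₂ * b₃ - a₃ * b₂ = 0) {x : ℝ × ℝ}
    (hx : N x ≠ 0) : Function.Bijective (x ⋆ ·) := by
  obtain ⟨x₁, x₂⟩ := x
  set m₁₁ := a₁ * x₁ + a₂ * x₂
  set m₁₂ := a₂ * x₁ + a₃ * x₂
  set m₂₁ := b₁ * x₁ + b₂ * x₂
  set m₂₂ := b₂ * x₁ + b₃ * x₂
  have hdet : N (x₁, x₂) = m₁₁ * m₂₂ - m₁₂ * m₂₁ := by
    simp only [pN, m₁₁, m₁₂, m₂₁, m₂₂]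
    linear_combination -x₂ ^ 2 * h4
  have hmul : ∀ y : ℝ × ℝ, (x₁, x₂) ⋆ y = (m₁₁ * y.1 + m₁₂ * y.2, m₂₁ * y.1 + m₂₂ * y.2) := by
    intro y
    simp only [pmul, m₁₁, m₁₂, m₂₁, m₂₂, Prod.mk.injEq]
    constructor <;> ring
  rw [hdet] at hx
  constructor
  · intro y y' hyy'
    simp only [hmul, Prod.mk.injEq] at hyy'
    obtain ⟨e₁, e₂⟩ := hyy'
    refine Prod.ext (mul_left_cancel₀ hx ?_) (mul_left_cancel₀ hx ?_)
    · linear_combination m₂₂ * e₁ - m₁₂ * e₂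
    · linear_combination m₁₁ * e₂ - m₂₁ * e₁
  · intro z
    refine ⟨(m₁₁ * m₂₂ - m₁₂ * m₂₁)⁻¹ • (m₂₂ * z.1 - m₁₂ * z.2, m₁₁ * z.2 - m₂₁ * z.1), ?_⟩
    have hinv := inv_mul_cancel₀ hx
    show (x₁, x₂) ⋆ _ = z
    simp only [hmul, Prod.smul_fst, Prod.smul_snd, smul_eq_mul]
    ext
    · linear_combination z.1 * hinv
    · linear_combination z.2 * hinv

theorem pmul_pinv {x : ℝ × ℝ} (hx : ∃ y, x ⋆ y = 𝟙) : x ⋆ x⁻¹ᵖ = 𝟙 := by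
  rw [pinv, dif_pos hx]
  exact hx.choose_spec

theorem pmul_pinv_of_pN_ne_zero (h4 : a₁ * a₃ - a₂ ^ 2 + a₂ * b₃ - a₃ * b₂ = 0) {x : ℝ × ℝ}
    (hx : N x ≠ 0) : x ⋆ x⁻¹ᵖ = 𝟙 :=
  pmul_pinv ((pmul_bijective h4 hx).2 𝟙)

theorem pinv_smul (h4 : a₁ * a₃ - a₂ ^ 2 + a₂ * b₃ - a₃ * b₂ = 0) {x : ℝ × ℝ} (hx : N x ≠ 0)
    {t : ℝ} (ht : t ≠ 0) : (t • x)⁻¹ᵖ = t⁻¹ • x⁻¹ᵖ := by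
  have htx : N (t • x) ≠ 0 := by rw [pN_smul]; exact mul_ne_zero (pow_ne_zero 2 ht) hx
  apply (pmul_bijective h4 htx).1
  simp only [pmul_pinv_of_pN_ne_zero h4 htx]
  rw [smul_pmul, pmul_smul, smul_smul, mul_inv_cancel₀ ht, one_smul,
    pmul_pinv_of_pN_ne_zero h4 hx]

theorem enorm2_smul (t : ℝ) (x : ℝ × ℝ) : enorm2 (t • x) = |t| * enorm2 x := by
  rw [enorm2, enorm2, ← Real.sqrt_sq_eq_abs, ← Real.sqrt_mul (sq_nonneg t)]
  congr 1
  simp only [Prod.smul_fst, Prod.smul_snd, smul_eq_mul]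
  ring

theorem enorm2_pos {x : ℝ × ℝ} (hx : x ≠ 0) : 0 < enorm2 x := by
  refine Real.sqrt_pos.2 ?_
  obtain ⟨x₁, x₂⟩ := x
  by_cases h₁ : x₁ = 0
  · have h₂ : x₂ ≠ 0 := fun h₂ => hx (by simp [h₁, h₂])
    positivity
  · positivity

theorem inv_enorm2_smul_smul {t : ℝ} (ht : 0 < t) (x : ℝ × ℝ) :
    (enorm2 (t • x))⁻¹ • (t • x) = (enorm2 x)⁻¹ • x := by
  rw [enorm2_smul, abs_of_pos ht, smul_smul, mul_inv, mul_comm t⁻¹, mul_assoc,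
    inv_mul_cancel₀ ht.ne', mul_one]

theorem posSep_inv_succ_smul (h4 : a₁ * a₃ - a₂ ^ 2 + a₂ * b₃ - a₃ * b₂ = 0) {e : ℝ × ℝ}
    (he : N e ≠ 0) : PosSep a₁ a₂ a₃ b₁ b₂ b₃ fun n : ℕ => ((n : ℝ) + 1)⁻¹ • e := by
  have hne : e ≠ 0 := by rintro rfl; simp [pN] at he
  refine ⟨fun n => (pmul_bijective h4 ?_).2 𝟙, ?_, ?_⟩
  · rw [pN_smul]; exact mul_ne_zero (by positivity) he
  · simpa using (tendsto_one_div_add_atTop_nhds_zero_nat (𝕜 := ℝ)).smul_const e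
  · refine ⟨|N ((enorm2 e)⁻¹ • e)|, abs_pos.2 ?_, fun n => ?_⟩
    · rw [pN_smul]; exact mul_ne_zero (by have := enorm2_pos hne; positivity) he
    · rw [inv_enorm2_smul_smul (by positivity)]

theorem PDiff.eq_pinv_pmul_fderiv (h4 : a₁ * a₃ - a₂ ^ 2 + a₂ * b₃ - a₃ * b₂ = 0)
    {f f' : ℝ × ℝ → ℝ × ℝ} (hf : PDiff a₁ a₂ a₃ b₁ b₂ b₃ f f') {x e : ℝ × ℝ}
    (hfx : DifferentiableAt ℝ f x) (he : N e ≠ 0) : f' x = e⁻¹ᵖ ⋆ fderiv ℝ f x e := by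
  set c : ℕ → ℝ := fun n => (n : ℝ) + 1
  have hc : ∀ n, 0 < c n := fun n => by positivity
  have hquot : ∀ n, (f (x + (c n)⁻¹ • e) - f x) ⋆ ((c n)⁻¹ • e)⁻¹ᵖ =
      e⁻¹ᵖ ⋆ (c n • (f (x + (c n)⁻¹ • e) - f x)) := fun n => by
    rw [pinv_smul h4 he (inv_ne_zero (hc n).ne'), inv_inv, pmul_comm, smul_pmul, pmul_smul]
  have hc_norm : Tendsto (fun n => ‖c n‖) atTop atTop := by
    simpa [c, Real.norm_eq_abs, abs_of_pos (hc _)] using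
      tendsto_atTop_add_const_right _ 1 tendsto_natCast_atTop_atTop
  have hreal : Tendsto (fun n => e⁻¹ᵖ ⋆ (c n • (f (x + (c n)⁻¹ • e) - f x))) atTop
      (𝓝 (e⁻¹ᵖ ⋆ fderiv ℝ f x e)) :=
    ((continuous_pmul_left _).tendsto _).comp (hfx.hasFDerivAt.lim e hc_norm)
  exact tendsto_nhds_unique ((hf.2 x _ (posSep_inv_succ_smul h4 he)).congr hquot) hreal

theorem IsPerplexParam.b₂_sq_sub_b₁_mul_b₃ (hp : IsPerplexParam a₁ a₂ a₃ b₁ b₂ b₃) :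
    b₂ ^ 2 - b₁ * b₃ = a₁ * b₂ - a₂ * b₁ := by
  obtain ⟨hi, -, h3, h4⟩ := hp
  have ha₂ : a₂ * (b₂ ^ 2 - b₁ * b₃ - (a₁ * b₂ - a₂ * b₁)) = 0 := by
    linear_combination (b₂ - a₁) * h3 - b₁ * h4
  have ha₃ : a₃ * (b₂ ^ 2 - b₁ * b₃ - (a₁ * b₂ - a₂ * b₁)) = 0 := by
    linear_combination (b₃ - a₂) * h3 - b₂ * h4
  by_contra hne
  have hne' := sub_ne_zero.2 hne
  apply hi
  rw [(mul_eq_zero.1 ha₂).resolve_right hne', (mul_eq_zero.1 ha₃).resolve_right hne']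
  ring

theorem IsPerplexParam.pmul_assoc (hp : IsPerplexParam a₁ a₂ a₃ b₁ b₂ b₃) (x y z : ℝ × ℝ) :
    x ⋆ y ⋆ z = x ⋆ (y ⋆ z) := by
  have hb := hp.b₂_sq_sub_b₁_mul_b₃
  obtain ⟨-, -, h3, h4⟩ := hp
  simp only [pmul, Prod.mk.injEq]
  constructor
  · linear_combination (x.2 * y.1 * z.1 - x.1 * y.1 * z.2) * h3 +
      (x.2 * y.2 * z.1 - x.1 * y.2 * z.2) * h4
  · linear_combination (x.2 * y.1 * z.1 - x.1 * y.1 * z.2) * hb +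
      (x.1 * y.2 * z.2 - x.2 * y.2 * z.1) * h3

theorem IsPerplexParam.pone_pmul (hp : IsPerplexParam a₁ a₂ a₃ b₁ b₂ b₃) (x : ℝ × ℝ) :
    𝟙 ⋆ x = x := by
  have hb := hp.b₂_sq_sub_b₁_mul_b₃
  obtain ⟨-, hD, h3, -⟩ := hp
  have hscaled : ((b₂, -b₁) : ℝ × ℝ) ⋆ x = (a₁ * b₂ - a₂ * b₁) • x := by
    simp only [pmul, Prod.smul_fst, Prod.smul_snd, smul_eq_mul, Prod.ext_iff]
    constructor
    · linear_combination x.2 * h3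
    · linear_combination x.2 * hb
  rw [pone, smul_pmul, hscaled, smul_smul, one_div_mul_cancel hD, one_smul]

theorem IsPerplexParam.pmul_left_comm (hp : IsPerplexParam a₁ a₂ a₃ b₁ b₂ b₃)
    (x y z : ℝ × ℝ) : x ⋆ (y ⋆ z) = y ⋆ (x ⋆ z) := by
  rw [← hp.pmul_assoc, pmul_comm x y, hp.pmul_assoc]

theorem IsPerplexParam.pmul_pinv_pmul (hp : IsPerplexParam a₁ a₂ a₃ b₁ b₂ b₃) {e : ℝ × ℝ}
    (he : N e ≠ 0) (z : ℝ × ℝ) : e ⋆ (e⁻¹ᵖ ⋆ z) = z := by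
  rw [← hp.pmul_assoc, pmul_pinv_of_pN_ne_zero hp.2.2.2 he, hp.pone_pmul]

theorem IsPerplexParam.pmul_eq_pmul_of_pinv_pmul_eq (hp : IsPerplexParam a₁ a₂ a₃ b₁ b₂ b₃)
    {e e' z z' : ℝ × ℝ} (he : N e ≠ 0) (he' : N e' ≠ 0) (h : e⁻¹ᵖ ⋆ z = e'⁻¹ᵖ ⋆ z') :
    e' ⋆ z = e ⋆ z' := by
  calc e' ⋆ z = e' ⋆ (e ⋆ (e⁻¹ᵖ ⋆ z)) := by rw [hp.pmul_pinv_pmul he]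
    _ = e ⋆ (e' ⋆ (e'⁻¹ᵖ ⋆ z')) := by rw [h, hp.pmul_left_comm]
    _ = e ⋆ z' := by rw [hp.pmul_pinv_pmul he']

end PerplexAlgebra

/-- Proposition 2.4 and Corollary 2.6: the derivative of a `ℙ_{a,b}`-differentiable
function is expressed through the real partial derivatives, and the generalized
Cauchy–Riemann equation holds. -/
theorem pderiv_formulas_and_GCR (a₁ a₂ a₃ b₁ b₂ b₃ : ℝ)
    (hp : IsPerplexParam a₁ a₂ a₃ b₁ b₂ b₃)
    (f f' : ℝ × ℝ → ℝ × ℝ)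
    (hdiff : PDiff a₁ a₂ a₃ b₁ b₂ b₃ f f')
    (hreal : Differentiable ℝ f) :
    ∀ x : ℝ × ℝ,
      f' x = pmul a₁ a₂ a₃ b₁ b₂ b₃ (pinv a₁ a₂ a₃ b₁ b₂ b₃ ((0, 1) : ℝ × ℝ)) (fderiv ℝ f x ((0, 1) : ℝ × ℝ)) ∧
      f' x = pmul a₁ a₂ a₃ b₁ b₂ b₃ (pinv a₁ a₂ a₃ b₁ b₂ b₃ ((1, 0) : ℝ × ℝ)) (fderiv ℝ f x ((1, 0) : ℝ × ℝ)) ∧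
      pmul a₁ a₂ a₃ b₁ b₂ b₃ ((0, 1) : ℝ × ℝ) (fderiv ℝ f x ((1, 0) : ℝ × ℝ)) =
        pmul a₁ a₂ a₃ b₁ b₂ b₃ ((1, 0) : ℝ × ℝ) (fderiv ℝ f x ((0, 1) : ℝ × ℝ)) := by
  intro x
  have hN₁ : pN a₁ a₂ a₃ b₁ b₂ b₃ (1, 0) ≠ 0 := by simpa [pN] using hp.2.1
  have hN₂ : pN a₁ a₂ a₃ b₁ b₂ b₃ (0, 1) ≠ 0 := by
    convert neg_ne_zero.2 hp.1 using 1
    simp [pN]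
  have h₁ := hdiff.eq_pinv_pmul_fderiv hp.2.2.2 (hreal x) hN₁
  have h₂ := hdiff.eq_pinv_pmul_fderiv hp.2.2.2 (hreal x) hN₂
  exact ⟨h₂, h₁, hp.pmul_eq_pmul_of_pinv_pmul_eq hN₁ hN₂ (h₁.symm.trans h₂)⟩
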